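/- arXiv:cs/0410054 — 4 statements merged into one kernel-verified Lean document; each statement's English description precedes it below -/
import Mathlib

section
/- For consistent paraconsistent intuitionistic fuzzy relations R and S on scheme Σ, reps(R ∪̂ S) = {r ∪ s | r ∈ reps(R), s ∈ reps(S)}, where (r ∪ s)(t) = max{r(t), s(t)} is fuzzy union and (R ∪̂ S)(t) = ⟨max{R(t)⁺,S(t)⁺}, min{R(t)⁻,S(t)⁻}⟩. That is, ∪̂ is a strong generalisation of fuzzy union. -/
def reps {τ : Type} (R : τ → ℝ × ℝ) : Set (τ → ℝ) :=
  {Q | (∀ t, Q t ∈ Set.Icc (0:ℝ) 1) ∧ ∀ t, (R t).1 ≤ Q t ∧ Q t ≤ 1 - (R t).2}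

/-- generalized union of PIF relations -/
def punion {τ : Type} (R S : τ → ℝ × ℝ) : τ → ℝ × ℝ :=
  fun t => (max (R t).1 (S t).1, min (R t).2 (S t).2)

/-- fuzzy union -/
def funion {τ : Type} (r s : τ → ℝ) : τ → ℝ := fun t => max (r t) (s t)

theorem stmt_4 {τ : Type} (R S : τ → ℝ × ℝ)
    (hRb : ∀ t, (R t).1 ∈ Set.Icc (0:ℝ) 1 ∧ (R t).2 ∈ Set.Icc (0:ℝ) 1)
    (hSb : ∀ t, (S t).1 ∈ Set.Icc (0:ℝ) 1 ∧ (S t).2 ∈ Set.Icc (0:ℝ) 1)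
    (hR : ∀ t, (R t).1 + (R t).2 ≤ 1)
    (hS : ∀ t, (S t).1 + (S t).2 ≤ 1) :
    reps (punion R S) = {q | ∃ r ∈ reps R, ∃ s ∈ reps S, q = funion r s} := by
  ext q
  simp only [Set.mem_setOf_eq, reps, punion]
  constructor
  · rintro ⟨hq01, hq⟩
    refine ⟨fun t => min (q t) (1 - (R t).2), ⟨?_, ?_⟩,
           fun t => min (q t) (1 - (S t).2), ⟨?_, ?_⟩, ?_⟩
    · intro t
      exact ⟨le_min (hq01 t).1 (by linarith [(hRb t).2.2]), min_le_of_left_le (hq01 t).2⟩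
    · intro t
      exact ⟨le_min ((le_max_left _ _).trans (hq t).1) (by linarith [hR t]), min_le_right _ _⟩
    · intro t
      exact ⟨le_min (hq01 t).1 (by linarith [(hSb t).2.2]), min_le_of_left_le (hq01 t).2⟩
    · intro t
      exact ⟨le_min ((le_max_right _ _).trans (hq t).1) (by linarith [hS t]), min_le_right _ _⟩
    · funext t
      have h2 := (hq t).2
      have hmax : q t ≤ max (1 - (R t).2) (1 - (S t).2) := by
        rcases le_total (R t).2 (S t).2 with h | h
        · exact le_max_of_le_left (by simpa [min_eq_left h] using h2)
        · exact le_max_of_le_right (by simpa [min_eq_right h] using h2)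
      simp [funion, ← min_max_distrib_left, min_eq_left hmax]
  · rintro ⟨r, ⟨hr01, hr⟩, s, ⟨hs01, hs⟩, rfl⟩
    refine ⟨fun t => ⟨le_max_of_le_left (hr01 t).1, max_le (hr01 t).2 (hs01 t).2⟩, fun t => ?_⟩
    constructor
    · exact max_le_max (hr t).1 (hs t).1
    · have h1 := (hr t).2
      have h2 := (hs t).2
      rcases le_total (R t).2 (S t).2 with h | h
      · simp only [min_eq_left h]
        exact max_le h1 (by linarith)
      · simp only [min_eq_right h]
        exact max_le (by linarith) h2
end

section
/- For consistent paraconsistent intuitionistic fuzzy relations R and S on the same scheme Σ, reps(R ∩̂ S) = {r ∩ s | r ∈ reps(R), s ∈ reps(S)}, where fuzzy intersection is (r ∩ s)(t) = min{r(t), s(t)}. That is, ∩̂ is a strong generalisation of fuzzy intersection. -/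
def pinter {τ : Type} (R S : τ → ℝ × ℝ) : τ → ℝ × ℝ :=
  fun t => (min (R t).1 (S t).1, max (R t).2 (S t).2)

/-- fuzzy intersection -/
def finter {τ : Type} (r s : τ → ℝ) : τ → ℝ := fun t => min (r t) (s t)

theorem stmt_11 {τ : Type} (R S : τ → ℝ × ℝ)
    (hRb : ∀ t, (R t).1 ∈ Set.Icc (0:ℝ) 1 ∧ (R t).2 ∈ Set.Icc (0:ℝ) 1)
    (hSb : ∀ t, (S t).1 ∈ Set.Icc (0:ℝ) 1 ∧ (S t).2 ∈ Set.Icc (0:ℝ) 1)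
    (hR : ∀ t, (R t).1 + (R t).2 ≤ 1)
    (hS : ∀ t, (S t).1 + (S t).2 ≤ 1) :
    reps (pinter R S) = {q | ∃ r ∈ reps R, ∃ s ∈ reps S, q = finter r s} := by
  ext Q
  constructor
  · rintro ⟨hQb, hQ⟩
    refine ⟨fun t => max (Q t) (R t).1, ⟨?_, ?_⟩, fun t => max (Q t) (S t).1, ⟨?_, ?_⟩, ?_⟩
    · intro t
      have h1 := (hQb t).1; have h2 := (hQb t).2
      have := (hRb t).1
      constructor
      · exact le_max_of_le_left h1
      · exact max_le h2 this.2
    · intro t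
      refine ⟨le_max_right _ _, max_le ?_ ?_⟩
      · exact le_trans (hQ t).2 (by simp [pinter]; linarith [le_max_left (R t).2 (S t).2])
      · linarith [hR t]
    · intro t
      have h1 := (hQb t).1; have h2 := (hQb t).2
      have := (hSb t).1
      exact ⟨le_max_of_le_left h1, max_le h2 this.2⟩
    · intro t
      refine ⟨le_max_right _ _, max_le ?_ ?_⟩
      · exact le_trans (hQ t).2 (by simp [pinter]; linarith [le_max_right (R t).2 (S t).2])
      · linarith [hS t]
    · funext t
      simp only [finter]
      rw [← max_min_distrib_left]
      have := (hQ t).1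
      simp only [pinter] at this
      exact (max_eq_left this).symm
  · rintro ⟨r, ⟨hrb, hr⟩, s, ⟨hsb, hs⟩, rfl⟩
    refine ⟨fun t => ?_, fun t => ?_⟩
    · exact ⟨le_min (hrb t).1 (hsb t).1, min_le_of_left_le (hrb t).2⟩
    · constructor
      · exact min_le_min (hr t).1 (hs t).1
      · simp only [pinter, finter]
        rcases max_cases (R t).2 (S t).2 with ⟨h, _⟩ | ⟨h, _⟩ <;> rw [h]
        · exact min_le_of_left_le (hr t).2
        · exact min_le_of_right_le (hs t).2
end

section
/- The generalized projection π̂_Δ is a strong generalisation of fuzzy projection: for a consistent paraconsistent intuitionistic fuzzy relation R on scheme Σ with Δ ⊆ Σ and τ(Σ) finite, reps(π̂_Δ(R)) = {π_Δ(Q) | Q ∈ reps(R)}, where (π̂_Δ(R))(t) = ⟨max{R(u)⁺ | u ∈ t^Σ}, min{R(u)⁻ | u ∈ t^Σ}⟩ and (π_Δ(Q))(t) = max{Q(u) | u ∈ t^Σ}, t^Σ being the set of extensions of tuple t on Δ to Σ. -/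
def Tup {A : Type} (dom : A → Type) (X : Set A) : Type := ∀ a : X, dom a

/-- extensions of a tuple `t` on `D` to the larger scheme `S` -/
def Exts {A : Type} {dom : A → Type} {D S : Set A} (hDS : D ⊆ S)
    (t : Tup dom D) : Set (Tup dom S) :=
  {u | ∀ a : D, u ⟨a.1, hDS a.2⟩ = t a}

/-- generalized projection of a PIF relation onto a subscheme:
max of belief factors and min of doubt factors over all extensions -/
noncomputable def pproj {A : Type} {dom : A → Type} {D S : Set A} (hDS : D ⊆ S)
    (R : Tup dom S → ℝ × ℝ) : Tup dom D → ℝ × ℝ :=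
  fun t => (sSup ((fun u => (R u).1) '' Exts hDS t),
            sInf ((fun u => (R u).2) '' Exts hDS t))

/-- fuzzy projection onto a subscheme -/
noncomputable def fproj {A : Type} {dom : A → Type} {D S : Set A} (hDS : D ⊆ S)
    (Q : Tup dom S → ℝ) : Tup dom D → ℝ :=
  fun t => sSup ((fun u => Q u) '' Exts hDS t)

lemma tup_finite {A : Type} [Fintype A] {dom : A → Type}
    [∀ a, Fintype (dom a)] (X : Set A) : Finite (Tup dom X) := by
  unfold Tup; infer_instance

lemma exts_nonempty {A : Type} {dom : A → Type} [∀ a, Nonempty (dom a)]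
    {D S : Set A} (hDS : D ⊆ S) (t : Tup dom D) : (Exts hDS t).Nonempty := by
  classical
  refine ⟨fun a => if h : a.1 ∈ D then t ⟨a.1, h⟩ else Classical.arbitrary (dom a.1), ?_⟩
  intro a
  simp only [dif_pos a.2]

lemma restrict_mem_exts {A : Type} {dom : A → Type} {D S : Set A} (hDS : D ⊆ S)
    (u : Tup dom S) : u ∈ Exts hDS (fun a => u ⟨a.1, hDS a.2⟩) := by
  intro a; rfl

theorem stmt_14 {A : Type} [Fintype A] {dom : A → Type}
    [∀ a, Fintype (dom a)] [∀ a, Nonempty (dom a)]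
    {D S : Set A} (hDS : D ⊆ S)
    (R : Tup dom S → ℝ × ℝ)
    (hRb : ∀ u, (R u).1 ∈ Set.Icc (0:ℝ) 1 ∧ (R u).2 ∈ Set.Icc (0:ℝ) 1)
    (hR : ∀ u, (R u).1 + (R u).2 ≤ 1) :
    reps (pproj hDS R) = {q | ∃ Q ∈ reps R, q = fproj hDS Q} := by
  haveI := tup_finite (dom := dom) S
  have hEfin : ∀ t : Tup dom D, (Exts hDS t).Finite := fun t => Set.toFinite _
  ext q
  constructor
  · rintro ⟨hq01, hq⟩
    -- construct the representative Q
    set res : Tup dom S → Tup dom D := fun u a => u ⟨a.1, hDS a.2⟩ with hres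
    set Q : Tup dom S → ℝ :=
      fun u => max (R u).1 (min (q (res u)) (1 - (R u).2)) with hQ
    have hQmem : Q ∈ reps R := by
      constructor
      · intro u
        constructor
        · exact le_trans (hRb u).1.1 (le_max_left _ _)
        · exact max_le (hRb u).1.2
            (le_trans (min_le_right _ _) (by linarith [(hRb u).2.1]))
      · intro u
        refine ⟨le_max_left _ _, max_le (by linarith [hR u]) (min_le_right _ _)⟩
    refine ⟨Q, hQmem, ?_⟩
    funext t
    have hne : (Exts hDS t).Nonempty := exts_nonempty hDS t
    have hres_eq : ∀ u ∈ Exts hDS t, res u = t := by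
      intro u hu; funext a; exact hu a
    -- q t is an upper bound for Q on Exts
    have hub : ∀ x ∈ (fun u => Q u) '' Exts hDS t, x ≤ q t := by
      rintro x ⟨u, hu, rfl⟩
      have h1 : (R u).1 ≤ q t := by
        refine le_trans ?_ (hq t).1
        exact le_csSup ((hEfin t).image _).bddAbove ⟨u, hu, rfl⟩
      simp only [hQ, hres_eq u hu]
      exact max_le h1 (min_le_left _ _)
    -- q t is attained
    have hmemInf : sInf ((fun u => (R u).2) '' Exts hDS t) ∈ _ :=
      (hne.image (fun u => (R u).2)).csInf_mem ((hEfin t).image _)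
    obtain ⟨u0, hu0, hu0eq⟩ := hmemInf
    have hq2 : q t ≤ 1 - (R u0).2 := by
      have := (hq t).2
      rw [show (pproj hDS R t).2 = sInf ((fun u => (R u).2) '' Exts hDS t) from rfl] at this
      rw [← hu0eq] at this
      linarith
    have hq1 : (R u0).1 ≤ q t := by
      refine le_trans ?_ (hq t).1
      exact le_csSup ((hEfin t).image _).bddAbove ⟨u0, hu0, rfl⟩
    have hattain : Q u0 = q t := by
      simp only [hQ, hres_eq u0 hu0]
      rw [min_eq_left hq2, max_eq_right hq1]
    have : fproj hDS Q t = q t := by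
      apply le_antisymm
      · exact csSup_le (hne.image _) hub
      · rw [← hattain]
        exact le_csSup ((hEfin t).image _).bddAbove ⟨u0, hu0, rfl⟩
    exact this.symm
  · rintro ⟨Q, ⟨hQ01, hQR⟩, rfl⟩
    constructor
    · intro t
      have hne := (exts_nonempty hDS t).image (fun u => Q u)
      constructor
      · obtain ⟨x, ⟨u, hu, rfl⟩⟩ := hne
        exact le_trans (hQ01 u).1 (le_csSup ((hEfin t).image _).bddAbove ⟨u, hu, rfl⟩)
      · exact csSup_le hne (by rintro x ⟨u, hu, rfl⟩; exact (hQ01 u).2)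
    · intro t
      have hne := exts_nonempty hDS t
      constructor
      · apply csSup_le (hne.image _)
        rintro x ⟨u, hu, rfl⟩
        exact le_trans (hQR u).1 (le_csSup ((hEfin t).image _).bddAbove ⟨u, hu, rfl⟩)
      · apply csSup_le (hne.image _)
        rintro x ⟨u, hu, rfl⟩
        have : sInf ((fun u => (R u).2) '' Exts hDS t) ≤ (R u).2 :=
          csInf_le ((hEfin t).image _).bddBelow ⟨u, hu, rfl⟩
        have h2 := (hQR u).2
        show Q u ≤ 1 - (pproj hDS R t).2
        simp only [pproj]
        linarith
end

section
/- The generalized selection σ̂_F is a strong generalisation of fuzzy selection: for a consistent paraconsistent intuitionistic fuzzy relation R on scheme Σ and any predicate F on tuples, reps(σ̂_F(R)) = {σ_F(Q) | Q ∈ reps(R)}, where σ̂_F(R)(t) = R(t) if F(t) holds and ⟨0,1⟩ otherwise, and σ_F(Q)(t) = Q(t) if F(t) holds and 0 otherwise. -/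
/-- generalized selection of a PIF relation by a predicate F -/
def psel {τ : Type} (F : τ → Prop) [DecidablePred F] (R : τ → ℝ × ℝ) : τ → ℝ × ℝ :=
  fun t => if F t then R t else ((0:ℝ), (1:ℝ))

/-- fuzzy selection -/
def fsel {τ : Type} (F : τ → Prop) [DecidablePred F] (Q : τ → ℝ) : τ → ℝ :=
  fun t => if F t then Q t else 0

theorem stmt_15 {τ : Type} (F : τ → Prop) [DecidablePred F] (R : τ → ℝ × ℝ)
    (hRb : ∀ t, (R t).1 ∈ Set.Icc (0:ℝ) 1 ∧ (R t).2 ∈ Set.Icc (0:ℝ) 1)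
    (hR : ∀ t, (R t).1 + (R t).2 ≤ 1) :
    reps (psel F R) = {q | ∃ Q ∈ reps R, q = fsel F Q} := by
  ext q
  constructor
  · rintro ⟨hb, hc⟩
    refine ⟨fun t => if F t then q t else (R t).1, ⟨?_, ?_⟩, ?_⟩
    · intro t
      by_cases h : F t <;> simp [h]
      · exact hb t
      · exact (hRb t).1
    · intro t
      by_cases h : F t <;> simp [h]
      · have := hc t; simpa [psel, h] using this
      · linarith [hR t]
    · funext t
      by_cases h : F t <;> simp [fsel, h]
      have := hc t
      simp [psel, h] at this
      linarith [this.1, this.2]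
  · rintro ⟨Q, ⟨hQb, hQc⟩, rfl⟩
    constructor
    · intro t
      by_cases h : F t <;> simp [fsel, h]
      exact hQb t
    · intro t
      by_cases h : F t <;> simp [fsel, psel, h]
      exact hQc t
end
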